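/- If G is a finite simple graph that is a p-sphere and H is a finite simple graph that is a q-sphere, then the join G * H is a (p+q+1)-sphere. -/

import Mathlib

universe u

/-- The unit sphere of a vertex: the subgraph induced on the neighbors of `v`. -/
def SimpleGraph.unitSphere {V : Type u} (G : SimpleGraph V) (v : V) :
    SimpleGraph {u : V // G.Adj v u} :=
  SimpleGraph.induce {u : V | G.Adj v u} G

/-- The graph obtained by deleting the vertex `v`. -/
def SimpleGraph.deleteVert {V : Type u} (G : SimpleGraph V) (v : V) :
    SimpleGraph {u : V // u ≠ v} :=
  SimpleGraph.induce {u : V | u ≠ v} G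

/-- Inductive notion of contractibility for graphs: the one-vertex graph is
contractible, and `G` is contractible if for some vertex `v` both the unit sphere
`S(v)` and the deletion `G ∖ v` are contractible. -/
inductive GraphContractible : ∀ {V : Type u}, SimpleGraph V → Prop
  | single {V : Type u} (G : SimpleGraph V) (h1 : Nonempty V) (h2 : Subsingleton V) :
      GraphContractible G
  | step {V : Type u} (G : SimpleGraph V) (v : V)
      (hS : GraphContractible (G.unitSphere v))
      (hD : GraphContractible (G.deleteVert v)) : GraphContractible G

/-- Inductive notion of a `q`-sphere: the empty graph is the `(-1)`-sphere, and for
`q ≥ 0` a graph is a `q`-sphere if every unit sphere is a `(q-1)`-sphere and deleting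
some vertex leaves a contractible graph. -/
inductive GraphSphere : ℤ → ∀ {V : Type u}, SimpleGraph V → Prop
  | empty {V : Type u} (G : SimpleGraph V) (h : IsEmpty V) : GraphSphere (-1) G
  | succ {V : Type u} (G : SimpleGraph V) (q : ℤ) (hq : 0 ≤ q)
      (hS : ∀ v : V, GraphSphere (q - 1) (G.unitSphere v))
      (hv : ∃ v : V, GraphContractible (G.deleteVert v)) : GraphSphere q G

/-- A graph is a `q`-manifold if every unit sphere is a `(q-1)`-sphere. -/
def IsGraphManifold (q : ℤ) {V : Type u} (G : SimpleGraph V) : Prop :=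
  ∀ v : V, GraphSphere (q - 1) (G.unitSphere v)

/-- The join of two graphs: keep all edges and connect every vertex of `G` to every
vertex of `H`. -/
def graphJoin {V W : Type u} (G : SimpleGraph V) (H : SimpleGraph W) :
    SimpleGraph (V ⊕ W) where
  Adj x y := match x, y with
    | Sum.inl a, Sum.inl b => G.Adj a b
    | Sum.inr a, Sum.inr b => H.Adj a b
    | Sum.inl _, Sum.inr _ => True
    | Sum.inr _, Sum.inl _ => True
  symm := ⟨by rintro (a | a) (b | b) h <;> simp_all [SimpleGraph.adj_comm]⟩
  loopless := ⟨by rintro (a | a) h <;> exact SimpleGraph.irrefl _ h⟩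

open Classical in
/-- `f_k(G)`: the number of cliques of `G` with exactly `k+1` vertices. -/
noncomputable def graphFVec {V : Type u} [Fintype V] (G : SimpleGraph V) (k : ℕ) : ℕ :=
  (Finset.univ.filter fun x : Finset V => x.card = k + 1 ∧ G.IsClique (↑x : Set V)).card

/-- The Euler characteristic `χ(G) = Σ_k (-1)^k f_k(G)`. -/
noncomputable def graphEulerChar {V : Type u} [Fintype V] (G : SimpleGraph V) : ℤ :=
  ∑ k ∈ Finset.range (Fintype.card V + 1), (-1 : ℤ) ^ k * graphFVec G k

open Classical in
/-- The curvature of a vertex: `K(v) = Σ_{x ∋ v} (-1)^(|x|-1)/|x|`, summing over the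
cliques of `G` containing `v`. -/
noncomputable def graphCurvature {V : Type u} [Fintype V] (G : SimpleGraph V) (v : V) : ℚ :=
  ∑ x ∈ Finset.univ.filter
      (fun x : Finset V => x.Nonempty ∧ G.IsClique (↑x : Set V) ∧ v ∈ x),
    (-1 : ℚ) ^ (x.card - 1) / (x.card : ℚ)

/-!
A unit sphere of `G * H` is again a join, `S(v) * H` or `G * S(w)`, whose dimensions add up to
one less, so unit spheres are handled by induction on the two sphere structures. Deleting a
vertex `v` of `G` leaves `(G ∖ v) * H`, and `K * H` is contractible whenever `K` is contractible
and `H` is finite (spheres are finite): peeling `K` reduces this to a cone `pt * H`, which is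
contractible by induction on `|H|`, since `S(w)` and `H ∖ w` give smaller cones.
-/

universe v

section Iso

variable {V : Type u} {V' : Type v} {G : SimpleGraph V} {G' : SimpleGraph V'}

def SimpleGraph.Iso.unitSphere (e : G ≃g G') (x : V) :
    G.unitSphere x ≃g G'.unitSphere (e x) where
  toEquiv := e.toEquiv.subtypeEquiv fun _ => e.map_adj_iff.symm
  map_rel_iff' := e.map_adj_iff

def SimpleGraph.Iso.deleteVert (e : G ≃g G') (x : V) :
    G.deleteVert x ≃g G'.deleteVert (e x) where
  toEquiv := e.toEquiv.subtypeEquiv fun _ => (not_congr e.toEquiv.apply_eq_iff_eq).symm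
  map_rel_iff' := e.map_adj_iff

end Iso

namespace graphJoin

variable {V W : Type u} (G : SimpleGraph V) (H : SimpleGraph W)

def unitSphereInlIso (x : V) :
    (graphJoin G H).unitSphere (.inl x) ≃g graphJoin (G.unitSphere x) H where
  toEquiv := Equiv.subtypeSum.trans <|
    .sumCongr (.subtypeEquivRight fun _ => .rfl) (.subtypeUnivEquiv fun _ => trivial)
  map_rel_iff' := by rintro ⟨_ | _, _⟩ ⟨_ | _, _⟩ <;> rfl

def unitSphereInrIso (y : W) :
    (graphJoin G H).unitSphere (.inr y) ≃g graphJoin G (H.unitSphere y) where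
  toEquiv := Equiv.subtypeSum.trans <|
    .sumCongr (.subtypeUnivEquiv fun _ => trivial) (.subtypeEquivRight fun _ => .rfl)
  map_rel_iff' := by rintro ⟨_ | _, _⟩ ⟨_ | _, _⟩ <;> rfl

def deleteVertInlIso (x : V) :
    (graphJoin G H).deleteVert (.inl x) ≃g graphJoin (G.deleteVert x) H where
  toEquiv := Equiv.subtypeSum.trans <|
    .sumCongr (.subtypeEquivRight fun _ => Sum.inl_injective.ne_iff)
      (.subtypeUnivEquiv fun _ => Sum.inr_ne_inl)
  map_rel_iff' := by rintro ⟨_ | _, _⟩ ⟨_ | _, _⟩ <;> rfl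

def deleteVertInrIso (y : W) :
    (graphJoin G H).deleteVert (.inr y) ≃g graphJoin G (H.deleteVert y) where
  toEquiv := Equiv.subtypeSum.trans <|
    .sumCongr (.subtypeUnivEquiv fun _ => Sum.inl_ne_inr)
      (.subtypeEquivRight fun _ => Sum.inr_injective.ne_iff)
  map_rel_iff' := by rintro ⟨_ | _, _⟩ ⟨_ | _, _⟩ <;> rfl

def isEmptyLeftIso [IsEmpty V] : graphJoin G H ≃g H where
  toEquiv := Equiv.emptySum V W
  map_rel_iff' := by
    rintro (a | _) (b | _) <;> first | rfl | exact isEmptyElim a | exact isEmptyElim b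

def isEmptyRightIso [IsEmpty W] : graphJoin G H ≃g G where
  toEquiv := Equiv.sumEmpty V W
  map_rel_iff' := by
    rintro (_ | a) (_ | b) <;> first | rfl | exact isEmptyElim a | exact isEmptyElim b

end graphJoin

namespace GraphContractible

theorem of_iso {V : Type u} {G : SimpleGraph V} (hG : GraphContractible G) :
    ∀ {V' : Type v} {G' : SimpleGraph V'}, G ≃g G' → GraphContractible G' := by
  induction hG with
  | single G hne hsub =>
    intro _ _ e
    exact single _ (hne.map e) e.symm.injective.subsingleton
  | step G x _ _ ihS ihD =>
    intro _ _ e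
    exact step _ (e x) (ihS (e.unitSphere x)) (ihD (e.deleteVert x))

theorem finite {V : Type u} {G : SimpleGraph V} (hG : GraphContractible G) : Finite V := by
  induction hG with
  | single => exact Finite.of_subsingleton
  | step _ x => classical exact .of_equiv _ (Equiv.optionSubtypeNe x)

theorem graphJoin_of_subsingleton {V W : Type u} [Nonempty V] [Subsingleton V] (G : SimpleGraph V)
    [Finite W] (H : SimpleGraph W) : GraphContractible (graphJoin G H) := by
  induction hn : Nat.card W using Nat.strong_induction_on generalizing W with
  | _ n ih =>
  cases isEmpty_or_nonempty W with
  | inl _ => exact (single G ‹_› ‹_›).of_iso (graphJoin.isEmptyRightIso G H).symm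
  | inr hW =>
    obtain ⟨y⟩ := hW
    refine step _ (.inr y) ?_ ?_
    · exact (ih _ (hn ▸ Finite.card_subtype_lt (H.irrefl (v := y))) (H.unitSphere y) rfl).of_iso
        (graphJoin.unitSphereInrIso G H y).symm
    · exact (ih _ (hn ▸ Finite.card_subtype_lt (not_not.2 rfl)) (H.deleteVert y) rfl).of_iso
        (graphJoin.deleteVertInrIso G H y).symm

theorem graphJoin {V W : Type u} {G : SimpleGraph V} (hG : GraphContractible G) [Finite W]
    (H : SimpleGraph W) : GraphContractible (graphJoin G H) := by
  induction hG with
  | single G _ _ => exact graphJoin_of_subsingleton G H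
  | step G x _ _ ihS ihD =>
    exact step _ (.inl x) (ihS.of_iso (graphJoin.unitSphereInlIso G H x).symm)
      (ihD.of_iso (graphJoin.deleteVertInlIso G H x).symm)

end GraphContractible

namespace GraphSphere

theorem of_iso {p : ℤ} {V : Type u} {G : SimpleGraph V} (hG : GraphSphere p G) :
    ∀ {V' : Type v} {G' : SimpleGraph V'}, G ≃g G' → GraphSphere p G' := by
  induction hG with
  | empty G _ =>
    intro _ _ e
    exact empty _ e.toEquiv.symm.isEmpty
  | succ G p hp _ hv ihS =>
    intro _ _ e
    obtain ⟨x, hx⟩ := hv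
    exact succ _ p hp (fun y => ihS (e.symm y) (e.symm.unitSphere y).symm)
      ⟨e x, hx.of_iso (e.deleteVert x)⟩

theorem finite {p : ℤ} {V : Type u} {G : SimpleGraph V} (hG : GraphSphere p G) : Finite V := by
  cases hG with
  | empty => exact Finite.of_subsingleton
  | succ _ _ _ _ hv =>
    obtain ⟨x, hx⟩ := hv
    have := hx.finite
    classical exact .of_equiv _ (Equiv.optionSubtypeNe x)

theorem graphJoin {p q : ℤ} {V W : Type u} {G : SimpleGraph V} {H : SimpleGraph W}
    (hG : GraphSphere p G) (hH : GraphSphere q H) : GraphSphere (p + q + 1) (graphJoin G H) := by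
  induction hG generalizing q W H with
  | empty G _ =>
    convert hH.of_iso (graphJoin.isEmptyLeftIso G H).symm using 1
    ring
  | succ G p hp hSG hvG ihG =>
    induction hH with
    | empty H _ =>
      convert (succ G p hp hSG hvG).of_iso (graphJoin.isEmptyRightIso G H).symm using 1
      ring
    | @succ W H q hq hSH hvH ihH =>
      have hH : GraphSphere q H := succ H q hq hSH hvH
      have : Finite W := hH.finite
      obtain ⟨x₀, hx₀⟩ := hvG
      refine succ _ _ (by omega) ?_
        ⟨.inl x₀, (hx₀.graphJoin H).of_iso (graphJoin.deleteVertInlIso G H x₀).symm⟩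
      rintro (x | y)
      · convert (ihG x hH).of_iso (graphJoin.unitSphereInlIso G H x).symm using 1
        ring
      · convert (ihH y).of_iso (graphJoin.unitSphereInrIso G H y).symm using 1
        ring

end GraphSphere

theorem graphJoin_sphere_general {V W : Type}
    (G : SimpleGraph V) (H : SimpleGraph W) (p q : ℤ)
    (hG : GraphSphere p G) (hH : GraphSphere q H) :
    GraphSphere (p + q + 1) (graphJoin G H) :=
  hG.graphJoin hH

/-- The join of a `p`-sphere and a `q`-sphere is a `(p+q+1)`-sphere. -/
theorem graphJoin_sphere {V W : Type} [Fintype V] [Fintype W]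
    (G : SimpleGraph V) (H : SimpleGraph W) (p q : ℤ)
    (hG : GraphSphere p G) (hH : GraphSphere q H) :
    GraphSphere (p + q + 1) (graphJoin G H) :=
  graphJoin_sphere_general G H p q hG hH
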